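/- For every β>0 and every L∈ℕ, the uniform-model partition function admits the probabilistic representation Z_{L,β} = c_β·e^{βL}·∑_{N=1}^{L} Γ(β)^N · P_β( A_{N+1}=L−N and V_{N+1}=0 ), where the probability refers to the first N+1 steps of the random walk V. -/

import Mathlib

open Filter MeasureTheory
open scoped BigOperators Classical

noncomputable section

/-- `c_β = (1+e^{-β/2})/(1-e^{-β/2})`. -/
def cbeta (β : ℝ) : ℝ := (1 + Real.exp (-β / 2)) / (1 - Real.exp (-β / 2))

/-- law of a single increment: `P_β(v = k) = e^{-(β/2)|k|}/c_β`. -/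
def pstep (β : ℝ) (k : ℤ) : ℝ := Real.exp (-(β / 2) * |(k : ℝ)|) / cbeta β

/-- weight (probability) of a finite path of increments. -/
def pathWeight (β : ℝ) {n : ℕ} (v : Fin n → ℤ) : ℝ := ∏ i, pstep β (v i)

/-- position of the walk after `i` steps, `V_i = v_1 + ⋯ + v_i`. -/
def walkAt {n : ℕ} (v : Fin n → ℤ) (i : ℕ) : ℤ :=
  ∑ j ∈ Finset.univ.filter (fun j : Fin n => (j : ℕ) < i), v j

/-- geometric area `A_n = ∑_{i=1}^n |V_i|`. -/
def areaOf {n : ℕ} (v : Fin n → ℤ) : ℤ := ∑ i ∈ Finset.range n, |walkAt v (i + 1)|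

/-- `x ∧̃ y`. -/
def twedge (x y : ℤ) : ℤ := if x * y < 0 then min |x| |y| else 0

/-- extend a configuration `l ∈ ℤ^N` (0-indexed) by `0` beyond `N`. -/
def extendConf {N : ℕ} (l : Fin N → ℤ) : ℕ → ℤ := fun i => if h : i < N then l ⟨i, h⟩ else 0

/-- Hamiltonian `H_{L,β}(l) = β ∑_{n=1}^{N-1} l_n ∧̃ l_{n+1}` (0-indexed `g`). -/
def HamEn (β : ℝ) (N : ℕ) (g : ℕ → ℤ) : ℝ :=
  β * ∑ n ∈ Finset.range (N - 1), ((twedge (g n) (g (n + 1)) : ℤ) : ℝ)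

/-- restricted partition function: sum of `e^{H_{L,β}(l)}` over `l ∈ Ω_L` satisfying `Q`. -/
def Zres (β : ℝ) (L : ℕ) (Q : ℕ → (ℕ → ℤ) → Prop) : ℝ :=
  ∑ N ∈ Finset.Icc 1 L, ∑' l : Fin N → ℤ,
    if (∑ i ∈ Finset.range N, (extendConf l i).natAbs) + N = L ∧ Q N (extendConf l)
    then Real.exp (HamEn β N (extendConf l)) else 0

/-- uniform-model partition function `Z_{L,β}`. -/
def Zuni (β : ℝ) (L : ℕ) : ℝ := Zres β L (fun _ _ => True)

/-- polymer measure of the event `Q`. -/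
def polP (β : ℝ) (L : ℕ) (Q : ℕ → (ℕ → ℤ) → Prop) : ℝ := Zres β L Q / Zuni β L

/-- set of bead-breakpoints of a configuration (`1`-indexed positions `i ∈ [1,N]`
with `l_i ∧̃ l_{i+1} = 0`, convention `l_{N+1}=0`). -/
def breakSet (N : ℕ) (g : ℕ → ℤ) : Finset ℕ :=
  (Finset.Icc 1 N).filter (fun i => twedge (g (i - 1)) (g i) = 0)

/-- cumulated length `u_j = |l_1|+⋯+|l_j|+j`. -/
def uLen (g : ℕ → ℤ) (j : ℕ) : ℕ := (∑ k ∈ Finset.range j, (g k).natAbs) + j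

/-- previous breakpoint before `b` (or `0`). -/
def prevBreak (N : ℕ) (g : ℕ → ℤ) (b : ℕ) : ℕ :=
  ((breakSet N g).filter (fun a => a < b)).sup id

/-- size `|I_{j_max}|` of the largest bead. -/
def maxBead (N : ℕ) (g : ℕ → ℤ) : ℕ :=
  (breakSet N g).sup (fun b => uLen g b - uLen g (prevBreak N g b))

/-- single-bead (one-bead) configurations : `l_i ∧̃ l_{i+1} ≠ 0` for `1 ≤ i ≤ N-1`. -/
def oneBead (N : ℕ) (g : ℕ → ℤ) : Prop :=
  ∀ i ∈ Finset.Icc 1 (N - 1), twedge (g (i - 1)) (g i) ≠ 0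

/-- one-bead partition function `Z^o_{L,β}`. -/
def Zone (β : ℝ) (L : ℕ) : ℝ := Zres β L oneBead

/-- `E_β(e^{-δ A_N} 1_{V_N = 0})`. -/
def EA0 (β δ : ℝ) (N : ℕ) : ℝ :=
  ∑' v : Fin N → ℤ, pathWeight β v * Real.exp (-δ * (areaOf v : ℝ)) *
    (if walkAt v N = 0 then 1 else 0)

/-- `E_β(e^{-δ A_N})`. -/
def EAfree (β δ : ℝ) (N : ℕ) : ℝ :=
  ∑' v : Fin N → ℤ, pathWeight β v * Real.exp (-δ * (areaOf v : ℝ))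

/-- `h_β(δ) := sup_N (1/N) log E_β(e^{-δA_N} 1_{V_N=0})`. -/
def hbeta (β δ : ℝ) : ℝ := ⨆ n : ℕ, Real.log (EA0 β δ (n + 1)) / (n + 1)

/-- `n Y_n = V_0 + V_1 + ⋯ + V_{n-1}`. -/
def ysum {n : ℕ} (v : Fin n → ℤ) : ℤ := ∑ i ∈ Finset.range n, walkAt v i

/-- probability of an event for the first `n` steps of the walk. -/
def prob0 (β : ℝ) (n : ℕ) (E : (Fin n → ℤ) → Prop) : ℝ :=
  ∑' v : Fin n → ℤ, pathWeight β v * (if E v then 1 else 0)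

/-- log-mgf `L(h) = log E_β(e^{h v_1})`. -/
def Lmgf (β : ℝ) (h : ℝ) : ℝ := Real.log (∑' k : ℤ, Real.exp (h * k) * pstep β k)

/-- domain `𝒟`. -/
def Dom (β : ℝ) : Set (ℝ × ℝ) := {p | |p.2| < β / 2 ∧ |p.1 + p.2| < β / 2}

/-- compact domain `K_η`. -/
def Keta (β η : ℝ) : Set (ℝ × ℝ) :=
  {p | p.2 ∈ Set.Icc (-β / 2 + η) (β / 2 - η) ∧ p.1 + p.2 ∈ Set.Icc (-β / 2 + η) (β / 2 - η)}

/-- `L_Λ(H) = ∫_0^1 L(x h_0 + h_1) dx`. -/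
def LA (β : ℝ) (p : ℝ × ℝ) : ℝ := ∫ x in (0:ℝ)..1, Lmgf β (x * p.1 + p.2)

/-- `∇L_Λ`. -/
def gradLA (β : ℝ) (p : ℝ × ℝ) : ℝ × ℝ :=
  (∫ x in (0:ℝ)..1, x * deriv (Lmgf β) (x * p.1 + p.2),
   ∫ x in (0:ℝ)..1, deriv (Lmgf β) (x * p.1 + p.2))

/-- `L_{Λ_n}(H) = ∑_{i=1}^n L((1-i/n)h_0 + h_1)`. -/
def LAn (β : ℝ) (n : ℕ) (p : ℝ × ℝ) : ℝ :=
  ∑ i ∈ Finset.Icc 1 n, Lmgf β ((1 - (i : ℝ) / n) * p.1 + p.2)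

/-- domain `𝒟_n`. -/
def Dn (β : ℝ) (n : ℕ) : Set (ℝ × ℝ) :=
  {p | |p.2| < β / 2 ∧ |(1 - 1 / (n : ℝ)) * p.1 + p.2| < β / 2}

/-- tilted probability `P_{n,H}(E)`. -/
def tiltProb (β : ℝ) (n : ℕ) (H : ℝ × ℝ) (E : (Fin n → ℤ) → Prop) : ℝ :=
  ∑' v : Fin n → ℤ, pathWeight β v *
    Real.exp (H.1 * ((ysum v : ℝ) / n) + H.2 * (walkAt v n : ℝ) - LAn β n H) *
    (if E v then 1 else 0)

/-- covariance matrix `B(H) = Hess L_Λ(H)`. -/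
def Bmat (β : ℝ) (p : ℝ × ℝ) : Matrix (Fin 2) (Fin 2) ℝ :=
  !![∫ x in (0:ℝ)..1, x ^ 2 * deriv (deriv (Lmgf β)) (x * p.1 + p.2),
     ∫ x in (0:ℝ)..1, x * deriv (deriv (Lmgf β)) (x * p.1 + p.2);
     ∫ x in (0:ℝ)..1, x * deriv (deriv (Lmgf β)) (x * p.1 + p.2),
     ∫ x in (0:ℝ)..1, deriv (deriv (Lmgf β)) (x * p.1 + p.2)]

/-- centered Gaussian density with covariance `B(H)`. -/
def gaussDen (β : ℝ) (p : ℝ × ℝ) (X : Fin 2 → ℝ) : ℝ :=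
  (2 * Real.pi * Real.sqrt (Bmat β p).det)⁻¹ *
    Real.exp (-(1 / 2) * dotProduct ((Bmat β p)⁻¹.mulVec X) X)

/-- `G̃(a)`. -/
def Gtil (β : ℝ) (Ht : ℝ × ℝ → ℝ × ℝ) (a : ℝ) : ℝ :=
  a * Real.log (cbeta β * Real.exp (-β)) - (1 / a) * (Ht (1 / a ^ 2, 0)).1
    + a * LA β (Ht (1 / a ^ 2, 0))

/-- partial sums of stretches `S_i = l_1 + ⋯ + l_i`. -/
def psum (g : ℕ → ℤ) (i : ℕ) : ℤ := ∑ k ∈ Finset.range i, g k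

/-- upper envelope `ℰ⁺_{l,i}`. -/
def envUp (N : ℕ) (g : ℕ → ℤ) (i : ℕ) : ℤ :=
  if i = 0 then 0 else if i ≤ N then max (psum g (i - 1)) (psum g i) else psum g N

/-- lower envelope `ℰ⁻_{l,i}`. -/
def envLo (N : ℕ) (g : ℕ → ℤ) (i : ℕ) : ℤ :=
  if i = 0 then 0 else if i ≤ N then min (psum g (i - 1)) (psum g i) else psum g N

/-- rescaled upper envelope `ℰ̃⁺_l(t)`. -/
def envUpR (N : ℕ) (g : ℕ → ℤ) (t : ℝ) : ℝ := (envUp N g ⌊t * (N + 1)⌋₊ : ℝ) / (N + 1)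

/-- rescaled lower envelope `ℰ̃⁻_l(t)`. -/
def envLoR (N : ℕ) (g : ℕ → ℤ) (t : ℝ) : ℝ := (envLo N g ⌊t * (N + 1)⌋₊ : ℝ) / (N + 1)

/-- the Wulff shape `γ*`. -/
def gammaStar (β : ℝ) (Ht : ℝ × ℝ → ℝ × ℝ) (ab : ℝ) (s : ℝ) : ℝ :=
  ∫ x in (0:ℝ)..s, deriv (Lmgf β) ((1 / 2 - x) * (Ht (1 / ab ^ 2, 0)).1)

/-- standard Brownian motion. -/
def IsStdBrownianMotion {Ω : Type*} [MeasurableSpace Ω] (P : Measure Ω)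
    (B : ℝ → Ω → ℝ) : Prop :=
  (∀ ω, B 0 ω = 0) ∧
  (∀ᵐ ω ∂P, Continuous fun t => B t ω) ∧
  (∀ t, Measurable (B t)) ∧
  (∀ s t : ℝ, 0 ≤ s → s ≤ t →
    P.map (fun ω => B t ω - B s ω) = ProbabilityTheory.gaussianReal 0 (Real.toNNReal (t - s))) ∧
  (∀ (n : ℕ) (t : Fin (n + 1) → ℝ), Monotone t → 0 ≤ t 0 →
    ProbabilityTheory.iIndepFun
      (fun i : Fin n => fun ω => B (t i.succ) ω - B (t i.castSucc) ω) P)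

end

noncomputable section Aux

open Finset

lemma cbeta_pos {β : ℝ} (hβ : 0 < β) : 0 < cbeta β := by
  have h1 : Real.exp (-β / 2) < 1 := by
    rw [show (1:ℝ) = Real.exp 0 by simp]
    exact Real.exp_lt_exp.mpr (by linarith)
  have h2 : 0 < Real.exp (-β / 2) := Real.exp_pos _
  exact div_pos (by linarith) (by linarith)

lemma twedge_two (x y : ℤ) : 2 * twedge x y = |x| + |y| - |x + y| := by
  unfold twedge
  split_ifs with h
  · rw [mul_neg_iff] at h
    simp only [Int.abs_eq_natAbs]
    omega
  · rw [not_lt] at h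
    rcases mul_nonneg_iff.mp h with ⟨hx, hy⟩ | ⟨hx, hy⟩ <;>
      simp only [Int.abs_eq_natAbs] <;> omega

lemma extendConf_lt {N : ℕ} (l : Fin N → ℤ) {i : ℕ} (h : i < N) :
    extendConf l i = l ⟨i, h⟩ := dif_pos h

lemma walkAt_zero {n : ℕ} (v : Fin n → ℤ) : walkAt v 0 = 0 := by
  simp [walkAt]

lemma walkAt_eq {n : ℕ} (v : Fin n → ℤ) {i : ℕ} (hi : i ≤ n) :
    walkAt v i = ∑ j ∈ Finset.range i, extendConf v j := by
  unfold walkAt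
  rw [Finset.sum_filter]
  have h1 : ∀ j : Fin n, (if (j : ℕ) < i then v j else 0)
      = (fun k : ℕ => if k < i then extendConf v k else 0) (j : ℕ) := by
    intro j
    simp only
    congr 1
    rw [extendConf_lt v j.isLt]
  rw [Finset.sum_congr rfl (fun j _ => h1 j),
    Fin.sum_univ_eq_sum_range (fun k : ℕ => if k < i then extendConf v k else 0) n,
    ← Finset.sum_filter]
  congr 1
  ext j
  simp only [Finset.mem_filter, Finset.mem_range]
  omega

/-- the height profile of the configuration: `W i = (-1)^(i+1) l_i` (1-indexed). -/
def Wfun (N : ℕ) (g : ℕ → ℤ) (i : ℕ) : ℤ :=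
  if 1 ≤ i ∧ i ≤ N then (-1) ^ (i + 1) * g (i - 1) else 0

lemma Wfun_zero (N : ℕ) (g : ℕ → ℤ) : Wfun N g 0 = 0 := by simp [Wfun]

lemma Wfun_gt (N : ℕ) (g : ℕ → ℤ) {i : ℕ} (h : N < i) : Wfun N g i = 0 := by
  simp only [Wfun, if_neg (by omega : ¬(1 ≤ i ∧ i ≤ N))]

lemma Wfun_mid (N : ℕ) (g : ℕ → ℤ) {i : ℕ} (h1 : 1 ≤ i) (h2 : i ≤ N) :
    Wfun N g i = (-1) ^ (i + 1) * g (i - 1) := if_pos ⟨h1, h2⟩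

/-- the bijection `l ↦ v` between configurations and bridges. -/
def Phi (N : ℕ) (l : Fin N → ℤ) : Fin (N + 1) → ℤ :=
  fun j => Wfun N (extendConf l) ((j : ℕ) + 1) - Wfun N (extendConf l) (j : ℕ)

lemma walk_Phi (N : ℕ) (l : Fin N → ℤ) {i : ℕ} (hi : i ≤ N + 1) :
    walkAt (Phi N l) i = Wfun N (extendConf l) i := by
  rw [walkAt_eq _ hi]
  have h1 : ∀ j ∈ Finset.range i, extendConf (Phi N l) j
      = Wfun N (extendConf l) (j + 1) - Wfun N (extendConf l) j := by
    intro j hj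
    rw [extendConf_lt _ (lt_of_lt_of_le (Finset.mem_range.mp hj) hi)]
    rfl
  rw [Finset.sum_congr rfl h1, Finset.sum_range_sub, Wfun_zero, sub_zero]

lemma abs_neg_one_pow_mul (k : ℕ) (x : ℤ) : |(-1 : ℤ) ^ k * x| = |x| := by
  rw [abs_mul, abs_pow, abs_neg, abs_one, one_pow, one_mul]

lemma Phi_inj (N : ℕ) : Function.Injective (Phi N) := by
  intro l l' h
  have hW : ∀ i, i ≤ N + 1 → Wfun N (extendConf l) i = Wfun N (extendConf l') i := by
    intro i hi
    rw [← walk_Phi N l hi, ← walk_Phi N l' hi, h]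
  funext n
  have h1 := hW ((n : ℕ) + 1) (by omega)
  rw [Wfun_mid _ _ (by omega) (by omega), Wfun_mid _ _ (by omega) (by omega)] at h1
  simp only [Nat.add_sub_cancel] at h1
  have h2 : extendConf l (n : ℕ) = extendConf l' (n : ℕ) :=
    mul_left_cancel₀ (pow_ne_zero _ (by norm_num)) h1
  rw [extendConf_lt _ n.isLt, extendConf_lt _ n.isLt] at h2
  simpa using h2

lemma walk_succ_sub {n : ℕ} (v : Fin n → ℤ) (j : Fin n) :
    walkAt v ((j : ℕ) + 1) - walkAt v (j : ℕ) = v j := by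
  rw [walkAt_eq v (by omega : (j : ℕ) + 1 ≤ n), walkAt_eq v (le_of_lt j.isLt),
    Finset.sum_range_succ, extendConf_lt _ j.isLt]
  simp

lemma Phi_range {N : ℕ} (v : Fin (N + 1) → ℤ) (hv : walkAt v (N + 1) = 0) :
    v ∈ Set.range (Phi N) := by
  refine ⟨fun n => (-1) ^ (n : ℕ) * walkAt v ((n : ℕ) + 1), ?_⟩
  set l : Fin N → ℤ := fun n => (-1) ^ (n : ℕ) * walkAt v ((n : ℕ) + 1) with hl
  have key : ∀ i, i ≤ N + 1 → Wfun N (extendConf l) i = walkAt v i := by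
    intro i hi
    rcases Nat.eq_zero_or_pos i with h0 | h0
    · rw [h0, Wfun_zero, walkAt_zero]
    rcases Nat.lt_or_ge N i with hN | hN
    · have : i = N + 1 := by omega
      rw [this, Wfun_gt _ _ (by omega), hv]
    obtain ⟨k, rfl⟩ : ∃ k, i = k + 1 := ⟨i - 1, by omega⟩
    rw [Wfun_mid _ _ (by omega) hN]
    simp only [Nat.add_sub_cancel]
    rw [extendConf_lt _ (by omega : k < N)]
    show (-1) ^ (k + 1 + 1) * ((-1) ^ ((⟨k, by omega⟩ : Fin N) : ℕ) *
      walkAt v (((⟨k, by omega⟩ : Fin N) : ℕ) + 1)) = _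
    simp only [Fin.val_mk]
    rw [← mul_assoc, ← pow_add]
    have h2 : k + 1 + 1 + k = 2 * (k + 1) := by omega
    rw [h2, pow_mul]
    norm_num
  funext j
  show Wfun N (extendConf l) ((j : ℕ) + 1) - Wfun N (extendConf l) (j : ℕ) = v j
  rw [key _ (by omega), key _ (by omega), walk_succ_sub]

lemma area_Phi (N : ℕ) (l : Fin N → ℤ) :
    areaOf (Phi N l) = ∑ i ∈ Finset.range N, |extendConf l i| := by
  unfold areaOf
  rw [Finset.sum_range_succ, walk_Phi _ _ (le_refl (N + 1)), Wfun_gt _ _ (by omega),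
    abs_zero, add_zero]
  refine Finset.sum_congr rfl ?_
  intro i hi
  have hi' := Finset.mem_range.mp hi
  rw [walk_Phi _ _ (by omega), Wfun_mid _ _ (by omega) (by omega)]
  simp only [Nat.add_sub_cancel]
  exact abs_neg_one_pow_mul _ _

lemma S_Phi (M : ℕ) (l : Fin (M + 1) → ℤ) :
    ∑ j : Fin (M + 2), |Phi (M + 1) l j| =
      |extendConf l 0| + ∑ j ∈ Finset.range M,
        |extendConf l j + extendConf l (j + 1)| + |extendConf l M| := by
  set g := extendConf l with hg
  have h0 : ∑ j : Fin (M + 2), |Phi (M + 1) l j|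
      = ∑ j ∈ Finset.range (M + 2), |Wfun (M + 1) g (j + 1) - Wfun (M + 1) g j| :=
    Fin.sum_univ_eq_sum_range (fun j : ℕ => |Wfun (M + 1) g (j + 1) - Wfun (M + 1) g j|) (M + 2)
  rw [h0, Finset.sum_range_succ', Finset.sum_range_succ]
  have hfirst : |Wfun (M + 1) g (0 + 1) - Wfun (M + 1) g 0| = |g 0| := by
    rw [Wfun_zero, sub_zero, Wfun_mid _ _ (by omega) (by omega)]
    simpa using abs_neg_one_pow_mul 2 (g 0)
  have hlast : |Wfun (M + 1) g (M + 1 + 1) - Wfun (M + 1) g (M + 1)| = |g M| := by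
    rw [Wfun_gt _ _ (by omega), Wfun_mid _ _ (by omega) (by omega), zero_sub, abs_neg]
    simpa using abs_neg_one_pow_mul (M + 2) (g M)
  have hmid : ∀ j ∈ Finset.range M,
      |Wfun (M + 1) g (j + 1 + 1) - Wfun (M + 1) g (j + 1)| = |g j + g (j + 1)| := by
    intro j hj
    have hj' := Finset.mem_range.mp hj
    have hd : Wfun (M + 1) g (j + 1 + 1) - Wfun (M + 1) g (j + 1)
        = (-1) ^ (j + 2) * (-(g j) - g (j + 1)) := by
      rw [Wfun_mid _ _ (by omega) (by omega), Wfun_mid _ _ (by omega) (by omega)]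
      simp only [Nat.add_sub_cancel]
      ring
    rw [hd, abs_neg_one_pow_mul]
    rw [show -(g j) - g (j + 1) = -(g j + g (j + 1)) by ring, abs_neg]
  rw [Finset.sum_congr rfl hmid, hfirst, hlast]
  ring

lemma key_int (M : ℕ) (l : Fin (M + 1) → ℤ) :
    2 * (∑ n ∈ Finset.range M, twedge (extendConf l n) (extendConf l (n + 1)))
      + ∑ j : Fin (M + 2), |Phi (M + 1) l j|
    = 2 * ∑ n ∈ Finset.range (M + 1), |extendConf l n| := by
  rw [S_Phi]
  set g := extendConf l with hg
  have h1 : ∑ n ∈ Finset.range M, (2 * twedge (g n) (g (n + 1)) + |g n + g (n + 1)|)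
      = ∑ n ∈ Finset.range M, (|g n| + |g (n + 1)|) :=
    Finset.sum_congr rfl fun n _ => by rw [twedge_two]; ring
  rw [Finset.sum_add_distrib, Finset.sum_add_distrib] at h1
  have h2 : ∑ n ∈ Finset.range (M + 1), |g n| = ∑ n ∈ Finset.range M, |g (n + 1)| + |g 0| :=
    Finset.sum_range_succ' _ _
  have h3 : ∑ n ∈ Finset.range (M + 1), |g n| = ∑ n ∈ Finset.range M, |g n| + |g M| :=
    Finset.sum_range_succ _ _
  have h4 : 2 * (∑ n ∈ Finset.range M, twedge (g n) (g (n + 1)))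
      = ∑ n ∈ Finset.range M, 2 * twedge (g n) (g (n + 1)) := Finset.mul_sum _ _ _
  linarith

lemma pathWeight_eq (β : ℝ) {n : ℕ} (v : Fin n → ℤ) :
    pathWeight β v
      = Real.exp (-(β / 2) * ((∑ j, |v j| : ℤ) : ℝ)) / (cbeta β) ^ n := by
  unfold pathWeight pstep
  rw [Finset.prod_div_distrib, Finset.prod_const, Finset.card_univ, Fintype.card_fin,
    ← Real.exp_sum]
  congr 1
  push_cast
  rw [Finset.mul_sum]

end Aux


noncomputable section Main

lemma main_N (β : ℝ) (hβ : 0 < β) (L M : ℕ) (hNL : M + 1 ≤ L) :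
    (∑' l : Fin (M + 1) → ℤ,
      if (∑ i ∈ Finset.range (M + 1), (extendConf l i).natAbs) + (M + 1) = L
      then Real.exp (HamEn β (M + 1) (extendConf l)) else 0)
    = cbeta β * Real.exp (β * L) * ((cbeta β * Real.exp (-β)) ^ (M + 1) *
        ∑' v : Fin (M + 1 + 1) → ℤ, pathWeight β v *
          (if areaOf v = (L : ℤ) - (M + 1 : ℕ) ∧ walkAt v (M + 1 + 1) = 0 then 1 else 0)) := by
  have hc : 0 < cbeta β := cbeta_pos hβ
  set c := cbeta β with hcdef
  set f : (Fin (M + 1 + 1) → ℤ) → ℝ := fun v => pathWeight β v *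
    (if areaOf v = (L : ℤ) - (M + 1 : ℕ) ∧ walkAt v (M + 1 + 1) = 0 then 1 else 0) with hf
  have hsupp : Function.support f ⊆ Set.range (Phi (M + 1)) := by
    intro v hv
    by_contra hvr
    apply hv
    have hw : ¬ walkAt v (M + 1 + 1) = 0 := fun h => hvr (Phi_range v h)
    simp [hf, hw]
  have htsum : ∑' l : Fin (M + 1) → ℤ, f (Phi (M + 1) l) = ∑' v, f v :=
    (Phi_inj (M + 1)).tsum_eq hsupp
  have hpt : ∀ l : Fin (M + 1) → ℤ,
      (if (∑ i ∈ Finset.range (M + 1), (extendConf l i).natAbs) + (M + 1) = L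
        then Real.exp (HamEn β (M + 1) (extendConf l)) else 0)
      = (c * Real.exp (β * L) * (c * Real.exp (-β)) ^ (M + 1)) * f (Phi (M + 1) l) := by
    intro l
    have hwalk : walkAt (Phi (M + 1) l) (M + 1 + 1) = 0 := by
      rw [walk_Phi _ _ (le_refl (M + 1 + 1)), Wfun_gt _ _ (by omega)]
    have harea : areaOf (Phi (M + 1) l) = ∑ i ∈ Finset.range (M + 1), |extendConf l i| :=
      area_Phi _ _
    have hcast : (∑ i ∈ Finset.range (M + 1), |extendConf l i|)
        = ((∑ i ∈ Finset.range (M + 1), (extendConf l i).natAbs : ℕ) : ℤ) := by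
      push_cast
      rfl
    by_cases hC : (∑ i ∈ Finset.range (M + 1), (extendConf l i).natAbs) + (M + 1) = L
    · have hSig : (∑ i ∈ Finset.range (M + 1), |extendConf l i|) = (L : ℤ) - (M + 1 : ℕ) := by
        rw [hcast]
        omega
      have hcond : areaOf (Phi (M + 1) l) = (L : ℤ) - (M + 1 : ℕ) := by rw [harea, hSig]
      rw [if_pos hC, hf]
      simp only
      rw [if_pos ⟨hcond, hwalk⟩, mul_one, pathWeight_eq]
      set S : ℤ := ∑ j : Fin (M + 1 + 1), |Phi (M + 1) l j| with hS
      have hkey := key_int M l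
      rw [hSig] at hkey
      set T : ℤ := ∑ n ∈ Finset.range M, twedge (extendConf l n) (extendConf l (n + 1)) with hT
      have hTr : (T : ℝ) = (L : ℝ) - (M + 1) - (S : ℝ) / 2 := by
        have h2 : 2 * (T : ℝ) + (S : ℝ) = 2 * ((L : ℝ) - (M + 1)) := by
          exact_mod_cast hkey
        linarith
      have hH : HamEn β (M + 1) (extendConf l) = β * ((L : ℝ) - (M + 1) - (S : ℝ) / 2) := by
        unfold HamEn
        rw [Nat.add_sub_cancel, ← hTr]
        congr 1
        rw [hT]
        push_cast
        ring
      rw [hH, ← hcdef]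
      have hrhs : c * Real.exp (β * (L : ℝ)) * (c * Real.exp (-β)) ^ (M + 1) *
            (Real.exp (-(β / 2) * (S : ℝ)) / c ^ (M + 1 + 1))
          = Real.exp (β * (L : ℝ)) * Real.exp (((M + 1 : ℕ) : ℝ) * (-β)) *
            Real.exp (-(β / 2) * (S : ℝ)) := by
        rw [mul_pow, Real.exp_nat_mul]
        field_simp
        ring
      rw [hrhs, ← Real.exp_add, ← Real.exp_add]
      congr 1
      push_cast
      ring
    · rw [if_neg hC, hf]
      simp only
      have hnc : ¬ (areaOf (Phi (M + 1) l) = (L : ℤ) - (M + 1 : ℕ)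
          ∧ walkAt (Phi (M + 1) l) (M + 1 + 1) = 0) := by
        rintro ⟨h1, -⟩
        rw [harea, hcast] at h1
        omega
      rw [if_neg hnc, mul_zero, mul_zero]
  calc (∑' l : Fin (M + 1) → ℤ,
      if (∑ i ∈ Finset.range (M + 1), (extendConf l i).natAbs) + (M + 1) = L
      then Real.exp (HamEn β (M + 1) (extendConf l)) else 0)
      = ∑' l : Fin (M + 1) → ℤ,
          (c * Real.exp (β * L) * (c * Real.exp (-β)) ^ (M + 1)) * f (Phi (M + 1) l) :=
        tsum_congr hpt
    _ = (c * Real.exp (β * L) * (c * Real.exp (-β)) ^ (M + 1)) *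
          ∑' l : Fin (M + 1) → ℤ, f (Phi (M + 1) l) := tsum_mul_left
    _ = _ := by rw [htsum, hf]; ring

end Main


/-- Probabilistic representation of the partition function. -/
theorem partition_function_representation (β : ℝ) (hβ : 0 < β) (L : ℕ) (hL : 1 ≤ L) :
    Zuni β L = cbeta β * Real.exp (β * L) *
      ∑ N ∈ Finset.Icc 1 L, (cbeta β * Real.exp (-β)) ^ N *
        (∑' v : Fin (N + 1) → ℤ, pathWeight β v *
          (if areaOf v = (L : ℤ) - N ∧ walkAt v (N + 1) = 0 then 1 else 0)) := by
  simp only [Zuni, Zres, and_true]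
  rw [Finset.mul_sum]
  refine Finset.sum_congr rfl ?_
  intro N hN
  obtain ⟨hN1, hNL⟩ := Finset.mem_Icc.mp hN
  obtain ⟨M, rfl⟩ : ∃ M, N = M + 1 := ⟨N - 1, by omega⟩
  exact main_N β hβ L M hNL
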